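/- arXiv:2302.12285 — 10 statements merged into one kernel-verified Lean document; each statement's English description precedes it below -/
import Mathlib

section
/- Let G be a finite 3-pyramidal group, let K be the subgroup of G generated by the involutions of G, and let C be the centralizer of K in G. If H is a subgroup of G of even order such that HC = G, then H is 3-pyramidal. -/
/-- A finite group is 3-pyramidal if it has exactly three involutions,
which are all conjugate to each other. -/
def IsThreePyramidal (G : Type*) [Group G] : Prop :=
  Nat.card {g : G | orderOf g = 2} = 3 ∧
    ∀ i j : G, orderOf i = 2 → orderOf j = 2 → IsConj i j

theorem stmt_0 {G : Type*} [Group G] [Finite G] (hG : IsThreePyramidal G)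
    (K C H : Subgroup G)
    (hK : K = Subgroup.closure {g : G | orderOf g = 2})
    (hC : C = Subgroup.centralizer (K : Set G))
    (hHeven : Even (Nat.card H))
    (hHC : ∀ g : G, ∃ h ∈ H, ∃ c ∈ C, g = h * c) :
    IsThreePyramidal H := by
  -- key claim: for any involution i of H and any involution s of G,
  -- s is conjugate to i by an element of H
  have claim : ∀ i : H, orderOf (i : G) = 2 → ∀ s : G, orderOf s = 2 →
      ∃ h ∈ H, h * (i : G) * h⁻¹ = s := by
    intro i hi s hs
    have hiK : (i : G) ∈ K := by
      rw [hK]; exact Subgroup.subset_closure hi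
    obtain ⟨g, hg⟩ := (isConj_iff).mp (hG.2 (i : G) s hi hs)
    obtain ⟨h, hh, c, hc, rfl⟩ := hHC g
    refine ⟨h, hh, ?_⟩
    have hcomm : (i : G) * c = c * (i : G) := by
      rw [hC] at hc
      exact Subgroup.mem_centralizer_iff.mp hc _ hiK
    have : c * (i : G) * c⁻¹ = (i : G) := by
      rw [← hcomm]; group
    calc h * (i : G) * h⁻¹ = h * (c * (i:G) * c⁻¹) * h⁻¹ := by rw [this]
      _ = (h * c) * (i : G) * (h * c)⁻¹ := by group
      _ = s := hg
  -- H contains an involution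
  obtain ⟨t, ht⟩ := exists_prime_orderOf_dvd_card' (G := H) 2
    (even_iff_two_dvd.mp hHeven)
  have htG : orderOf (t : G) = 2 := by rw [Subgroup.orderOf_coe]; exact ht
  constructor
  · rw [← hG.1]
    apply Nat.card_eq_of_bijective
      (f := fun x : {g : H | orderOf g = 2} =>
        (⟨(x.1 : G), by
          have := x.2
          simp only [Set.mem_setOf_eq] at this ⊢
          rw [Subgroup.orderOf_coe]; exact this⟩ : {g : G | orderOf g = 2}))
    constructor
    · intro a b hab
      have := congrArg Subtype.val hab
      ext
      simpa using this
    · rintro ⟨s, hs⟩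
      obtain ⟨h, hh, hconj⟩ := claim t htG s hs
      have hsH : s ∈ H := hconj ▸ H.mul_mem (H.mul_mem hh t.2) (H.inv_mem hh)
      refine ⟨⟨⟨s, hsH⟩, ?_⟩, rfl⟩
      simpa [Set.mem_setOf_eq, Subgroup.orderOf_mk] using hs
  · intro i j hi hj
    have hiG : orderOf (i : G) = 2 := by rw [Subgroup.orderOf_coe]; exact hi
    have hjG : orderOf (j : G) = 2 := by rw [Subgroup.orderOf_coe]; exact hj
    obtain ⟨h, hh, hconj⟩ := claim i hiG (j : G) hjG
    rw [isConj_iff]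
    exact ⟨⟨h, hh⟩, Subtype.ext (by push_cast; exact hconj)⟩
end

section
/- Let G be a finite 3-pyramidal group whose involutions commute pairwise. If H is a normal subgroup of G of odd order, then the quotient group G/H is 3-pyramidal. -/
/-- The image in the quotient of an involution of `G` is an involution,
when the subgroup has odd order. -/
private lemma push_inv {G : Type*} [Group G] (H : Subgroup G) [H.Normal]
    (hHodd : Odd (Nat.card H)) {g : G} (hg : orderOf g = 2) :
    orderOf ((g : G ⧸ H)) = 2 := by
  have hdvd : orderOf ((g : G ⧸ H)) ∣ 2 := by
    rw [← hg]; exact orderOf_map_dvd (QuotientGroup.mk' H) g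
  have hne : (g : G ⧸ H) ≠ 1 := by
    intro h1
    have hgH : g ∈ H := (QuotientGroup.eq_one_iff g).mp h1
    have h2 : orderOf g ∣ Nat.card H := Subgroup.orderOf_dvd_natCard H hgH
    rw [hg] at h2
    have : Odd 2 := hHodd.of_dvd_nat h2
    simp [Nat.odd_iff] at this
  rcases (Nat.dvd_prime Nat.prime_two).mp hdvd with h1 | h2
  · exact absurd (orderOf_eq_one_iff.mp h1) hne
  · exact h2

/-- Every involution of `G ⧸ H` lifts to an involution of `G`. -/
private lemma lift_inv {G : Type*} [Group G] [Finite G] (H : Subgroup G) [H.Normal]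
    (hHodd : Odd (Nat.card H)) {x : G ⧸ H} (hx : orderOf x = 2) :
    ∃ g : G, orderOf g = 2 ∧ (g : G ⧸ H) = x := by
  obtain ⟨g, rfl⟩ := QuotientGroup.mk_surjective x
  have hg2 : g ^ 2 ∈ H := by
    rw [← QuotientGroup.eq_one_iff]
    show ((g : G ⧸ H)) ^ 2 = 1
    rw [← hx]; exact pow_orderOf_eq_one _
  set m := orderOf (g ^ 2) with hm
  have hmodd : Odd m := hHodd.of_dvd_nat (Subgroup.orderOf_dvd_natCard H hg2)
  set n := orderOf g with hn
  have h2n : 2 ∣ n := by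
    rw [← hx]; exact orderOf_map_dvd (QuotientGroup.mk' H) g
  have hn2m : n ∣ 2 * m := by
    rw [hn, orderOf_dvd_iff_pow_eq_one, pow_mul]
    exact pow_orderOf_eq_one (g ^ 2)
  obtain ⟨d, hd⟩ := h2n
  have hdm : d ∣ m := by
    rw [hd] at hn2m
    exact (mul_dvd_mul_iff_left (two_ne_zero)).mp hn2m
  have hdodd : Odd d := hmodd.of_dvd_nat hdm
  have hnpos : 0 < n := orderOf_pos g
  have hdpos : 0 < d := by omega
  refine ⟨g ^ d, ?_, ?_⟩
  · rw [orderOf_pow, ← hn, hd, Nat.gcd_eq_right ⟨2, by ring⟩,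
      Nat.mul_div_cancel _ hdpos]
  · show ((g : G ⧸ H)) ^ d = (g : G ⧸ H)
    rw [← pow_mod_orderOf, hx, Nat.odd_iff.mp hdodd, pow_one]

theorem stmt_1 {G : Type*} [Group G] [Finite G] (hG : IsThreePyramidal G)
    (hcomm : ∀ i j : G, orderOf i = 2 → orderOf j = 2 → i * j = j * i)
    (H : Subgroup G) [H.Normal] (hHodd : Odd (Nat.card H)) :
    IsThreePyramidal (G ⧸ H) := by
  obtain ⟨hcard, hconj⟩ := hG
  have hinj : ∀ i j : G, orderOf i = 2 → orderOf j = 2 →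
      (i : G ⧸ H) = (j : G ⧸ H) → i = j := by
    intro i j hi hj hij
    have hmem : i⁻¹ * j ∈ H := QuotientGroup.eq.mp hij
    have hii : i * i = 1 := by
      have := pow_orderOf_eq_one i; rwa [hi, pow_two] at this
    have hjj : j * j = 1 := by
      have := pow_orderOf_eq_one j; rwa [hj, pow_two] at this
    have hi1 : i⁻¹ = i := inv_eq_of_mul_eq_one_right hii
    rw [hi1] at hmem
    have hsq : (i * j) ^ 2 = 1 := by
      rw [pow_two, show i * j * (i * j) = i * (j * i) * j from by group,
        ← hcomm i j hi hj, show i * (i * j) * j = (i * i) * (j * j) from by group,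
        hii, hjj, one_mul]
    have hdvd2 : orderOf (i * j) ∣ 2 := orderOf_dvd_of_pow_eq_one hsq
    have hodd : Odd (orderOf (i * j)) :=
      hHodd.of_dvd_nat (Subgroup.orderOf_dvd_natCard H hmem)
    have h1 : i * j = 1 := by
      rcases (Nat.dvd_prime Nat.prime_two).mp hdvd2 with h | h
      · exact orderOf_eq_one_iff.mp h
      · rw [h] at hodd; simp [Nat.odd_iff] at hodd
    rw [← hi1]
    exact inv_eq_of_mul_eq_one_right h1
  constructor
  · rw [← hcard]
    refine Nat.card_congr (Equiv.ofBijective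
      (fun g : {g : G | orderOf g = 2} =>
        (⟨(g : G), push_inv H hHodd g.2⟩ : {x : G ⧸ H | orderOf x = 2}))
      ⟨?_, ?_⟩).symm
    · rintro ⟨i, hi⟩ ⟨j, hj⟩ h
      exact Subtype.ext (hinj i j hi hj (congrArg Subtype.val h))
    · rintro ⟨x, hx⟩
      obtain ⟨g, hg, hgx⟩ := lift_inv H hHodd hx
      exact ⟨⟨g, hg⟩, Subtype.ext hgx⟩
  · intro x y hx hy
    obtain ⟨a, ha, rfl⟩ := lift_inv H hHodd hx
    obtain ⟨b, hb, rfl⟩ := lift_inv H hHodd hy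
    exact (QuotientGroup.mk' H).map_isConj (hconj a b ha hb)
end

section
/- Let G be a finite 3-pyramidal group whose order is congruent to 2 modulo 4 (i.e., |G| = 2d with d odd). Let K be the subgroup of G generated by the involutions of G and let C be the centralizer of K in G. Then K is isomorphic to the symmetric group S_3 and G is isomorphic to the direct product C × K. -/
open Subgroup Pointwise

section

variable {G : Type*} [Group G]

theorem orderOf_eq_two_iff_mul_self {x : G} : orderOf x = 2 ↔ x * x = 1 ∧ x ≠ 1 := by
  rw [orderOf_eq_prime_iff, sq]

theorem nonempty_mulEquiv_centralizer_prod {H : Type*} [Group H] (φ : G →* H) {K : Subgroup G}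
    (hK : Function.Bijective (φ.domRestrict K)) (hker : φ.ker = centralizer (K : Set G)) :
    Nonempty (G ≃* centralizer (K : Set G) × K) := by
  have hcomm (c : centralizer (K : Set G)) (k : K) :
      Commute ((centralizer (K : Set G)).subtype c) (K.subtype k) :=
    (mem_centralizer_iff.mp c.2 k k.2).symm
  set θ := MonoidHom.noncommCoprod _ _ hcomm
  have hθ (c : centralizer (K : Set G)) (k : K) : θ (c, k) = c * k := rfl
  have hinj : Function.Injective θ := by
    rw [injective_iff_map_eq_one]
    rintro ⟨c, k⟩ h
    rw [hθ, mul_eq_one_iff_eq_inv] at h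
    have hcK : (c : G) ∈ K := h ▸ inv_mem k.2
    have hc : (⟨c, hcK⟩ : K) = 1 := hK.1 <| by
      rw [map_one]
      exact (hker.symm ▸ c.2 : (c : G) ∈ φ.ker)
    have hc1 : (c : G) = 1 := congrArg Subtype.val hc
    rw [hc1, eq_comm, inv_eq_one] at h
    exact Prod.ext (Subtype.ext hc1) (Subtype.ext h)
  have hsurj : Function.Surjective θ := by
    intro g
    obtain ⟨k, hk⟩ := hK.2 (φ g)
    refine ⟨(⟨g * (k : G)⁻¹, hker ▸ ?_⟩, k), by rw [hθ]; exact inv_mul_cancel_right g k⟩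
    rw [MonoidHom.mem_ker, map_mul, map_inv, ← hk]
    exact mul_inv_cancel _
  exact ⟨(MulEquiv.ofBijective θ ⟨hinj, hsurj⟩).symm⟩

theorem eq_of_commute_of_orderOf_eq_two [Finite G] (h4 : ¬ 4 ∣ Nat.card G) {t u : G}
    (ht : orderOf t = 2) (hu : orderOf u = 2) (htu : Commute t u) : t = u := by
  by_contra hne
  have hzpowers {x : G} (hx : orderOf x = 2) : IsPGroup 2 (zpowers x) :=
    .of_card (n := 1) (by rw [Nat.card_zpowers, hx, pow_one])
  have hle : zpowers t ≤ normalizer (zpowers u) := by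
    refine le_trans ?_ (centralizer_le_normalizer _)
    rw [zpowers_le, zpowers_eq_closure, centralizer_closure, mem_centralizer_singleton_iff]
    exact htu.eq
  obtain ⟨n, hn⟩ := IsPGroup.iff_card.mp ((hzpowers ht).to_sup_of_normal_right' (hzpowers hu) hle)
  have hn1 : n ≤ 1 := by
    by_contra! h
    exact h4 ((pow_dvd_pow 2 h).trans (hn ▸ card_subgroup_dvd_card _))
  have hcard : ({1, t, u} : Set G).ncard ≤ Nat.card (zpowers t ⊔ zpowers u : Subgroup G) := by
    rw [← Nat.card_coe_set_eq]
    refine Set.ncard_le_ncard ?_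
    simp only [Set.insert_subset_iff, Set.singleton_subset_iff, SetLike.mem_coe]
    exact ⟨one_mem _, mem_sup_left (mem_zpowers t), mem_sup_right (mem_zpowers u)⟩
  rw [Set.ncard_eq_three.mpr ⟨1, t, u, ?_, ?_, hne, rfl⟩, hn] at hcard
  · have := Nat.pow_le_pow_right two_pos hn1
    omega
  · exact fun h => by simp [← h] at ht
  · exact fun h => by simp [← h] at hu

variable (G) in
def involutions : SubMulAction (MulAut G) G where
  carrier := {g | orderOf g = 2}
  smul_mem' σ g hg := (MulEquiv.orderOf_eq σ g).trans hg

variable (G) in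
def conjInvolutions : G →* Equiv.Perm (involutions G) :=
  (MulAction.toPermHom (MulAut G) (involutions G)).comp MulAut.conj

theorem conjInvolutions_apply (g : G) (t : involutions G) :
    (conjInvolutions G g t : G) = g * t * g⁻¹ := rfl

theorem ker_conjInvolutions :
    (conjInvolutions G).ker = centralizer (closure (involutions G : Set G)) := by
  ext g
  rw [MonoidHom.mem_ker, centralizer_closure, mem_centralizer_iff, Equiv.ext_iff]
  simp only [Subtype.ext_iff, conjInvolutions_apply, Equiv.Perm.coe_one, id_eq, Subtype.forall,
    SetLike.mem_coe, mul_inv_eq_iff_eq_mul]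
  exact forall₂_congr fun _ _ => eq_comm

section Dihedral

variable {a b : G}

theorem mul_zpow_mul_eq_inv (ha : a * a = 1) (hb : b * b = 1) (k : ℤ) :
    a * (a * b) ^ k * a = ((a * b) ^ k)⁻¹ := by
  have ha' : a⁻¹ = a := inv_eq_of_mul_eq_one_right ha
  have hb' : b⁻¹ = b := inv_eq_of_mul_eq_one_right hb
  calc a * (a * b) ^ k * a = a * (a * b) ^ k * a⁻¹ := by rw [ha']
    _ = (a * (a * b) * a⁻¹) ^ k := conj_zpow.symm
    _ = ((a * b) ^ k)⁻¹ := by rw [← inv_zpow, mul_inv_rev, ha', hb', ← mul_assoc, ha, one_mul]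

theorem card_closure_pair_le [Finite G] (ha : a * a = 1) (hb : b * b = 1) :
    Nat.card (closure {a, b}) ≤ 2 * orderOf (a * b) := by
  set Z := zpowers (a * b)
  have ha' : a⁻¹ = a := inv_eq_of_mul_eq_one_right ha
  have hb' : b⁻¹ = b := inv_eq_of_mul_eq_one_right hb
  have hmem (g : G) : g ∈ a • (Z : Set G) ↔ a * g ∈ Z := by
    rw [Set.mem_smul_set_iff_inv_smul_mem, smul_eq_mul, ha', SetLike.mem_coe]
  have hstable :
      ∀ x ∈ ({a, b} : Set G), ∀ g ∈ (Z : Set G) ∪ a • Z, x * g ∈ (Z : Set G) ∪ a • Z := by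
    simp only [Set.mem_insert_iff, Set.mem_singleton_iff, Set.mem_union, SetLike.mem_coe, hmem]
    rintro x (rfl | rfl) g (hg | hg)
    · right; rwa [← mul_assoc, ha, one_mul]
    · left; exact hg
    · right; rw [← mul_assoc]; exact mul_mem (mem_zpowers _) hg
    · left
      have : x * g = (a * x)⁻¹ * (a * g) := by
        rw [mul_inv_rev, ha', hb', mul_assoc, ← mul_assoc a a, ha, one_mul]
      rw [this]; exact mul_mem (inv_mem (mem_zpowers _)) hg
  have hsub : (closure {a, b} : Set G) ⊆ (Z : Set G) ∪ a • Z := by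
    intro g hg
    induction hg using closure_induction_left with
    | one => exact Or.inl (one_mem Z)
    | mul_left x hx y _ ih => exact hstable x hx y ih
    | inv_mul_cancel x hx y _ ih =>
      rcases hx with rfl | rfl
      · rw [ha']; exact hstable _ (Or.inl rfl) y ih
      · rw [hb']; exact hstable _ (Or.inr rfl) y ih
  calc Nat.card (closure {a, b})
      = (closure {a, b} : Set G).ncard := (Nat.card_coe_set_eq _).symm
    _ ≤ ((Z : Set G) ∪ a • Z).ncard := Set.ncard_le_ncard hsub
    _ ≤ (Z : Set G).ncard + (a • (Z : Set G)).ncard := Set.ncard_union_le _ _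
    _ = 2 * orderOf (a * b) := by
      rw [Set.ncard_smul_set, ← Nat.card_coe_set_eq, SetLike.coe_sort_coe, Nat.card_zpowers,
        two_mul]

theorem orderOf_eq_two_of_mem_smul_zpowers (ha : orderOf a = 2) (hb : orderOf b = 2)
    (hab : ¬Commute a b) {g : G} (hg : g ∈ a • (zpowers (a * b) : Set G)) : orderOf g = 2 := by
  obtain ⟨ha2, -⟩ := orderOf_eq_two_iff_mul_self.mp ha
  obtain ⟨hb2, -⟩ := orderOf_eq_two_iff_mul_self.mp hb
  obtain ⟨_, ⟨k, rfl⟩, rfl⟩ := hg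
  simp only [smul_eq_mul]
  refine orderOf_eq_two_iff_mul_self.mpr ⟨?_, fun h => hab ?_⟩
  · rw [← mul_assoc, mul_assoc a, ← mul_assoc a, mul_zpow_mul_eq_inv ha2 hb2,
      inv_mul_cancel]
  · have hcomm : Commute a (a * b) := by
      rw [← Commute.inv_left_iff, inv_eq_of_mul_eq_one_right h]
      exact (Commute.refl _).zpow_left k
    simpa using (Commute.refl a).inv_right.mul_right hcomm

theorem orderOf_mul_le_card_involutions [Finite G] (ha : orderOf a = 2) (hb : orderOf b = 2)
    (hab : ¬Commute a b) : orderOf (a * b) ≤ Nat.card (involutions G) := by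
  calc orderOf (a * b) = (a • (zpowers (a * b) : Set G)).ncard := by
        rw [Set.ncard_smul_set, ← Nat.card_coe_set_eq, SetLike.coe_sort_coe, Nat.card_zpowers]
    _ ≤ Nat.card (involutions G) := by
      rw [← SetLike.coe_sort_coe, Nat.card_coe_set_eq]
      exact Set.ncard_le_ncard fun g hg => orderOf_eq_two_of_mem_smul_zpowers ha hb hab hg

end Dihedral

section ThreeInvolutions

variable [Finite G] (h4 : ¬ 4 ∣ Nat.card G)
include h4

theorem conjInvolutions_apply_eq_self_iff (t u : involutions G) :
    conjInvolutions G t u = u ↔ t = u := by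
  rw [Subtype.ext_iff, conjInvolutions_apply, mul_inv_eq_iff_eq_mul]
  exact ⟨fun h => Subtype.ext (eq_of_commute_of_orderOf_eq_two h4 t.2 u.2 h), by rintro rfl; rfl⟩

variable (h3 : Nat.card (involutions G) = 3)
include h3

theorem map_closure_involutions_eq_top :
    (closure (involutions G : Set G)).map (conjInvolutions G) = ⊤ := by
  set φ := conjInvolutions G
  set H := (closure (involutions G : Set G)).map φ
  have hinj : Function.Injective fun t : involutions G => φ t := fun t u h => by
    replace h : φ t = φ u := h
    have : φ u t = t := by rw [← h]; exact (conjInvolutions_apply_eq_self_iff h4 t t).mpr rfl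
    exact ((conjInvolutions_apply_eq_self_iff h4 u t).mp this).symm
  have hne : 1 ∉ Set.range fun t : involutions G => φ t := by
    rintro ⟨t, ht⟩
    replace ht : φ t = 1 := ht
    have : Nontrivial (involutions G) := by
      rw [← Finite.one_lt_card_iff_nontrivial, h3]; norm_num
    obtain ⟨u, hu⟩ := exists_ne t
    exact hu ((conjInvolutions_apply_eq_self_iff h4 t u).mp (by rw [ht]; rfl)).symm
  have hsub : insert 1 (Set.range fun t : involutions G => φ t) ⊆ H := by
    rintro _ (rfl | ⟨t, rfl⟩)
    · exact one_mem _
    · exact mem_map_of_mem _ (subset_closure t.2)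
  have hle : 4 ≤ Nat.card H :=
    calc 4 = (insert 1 (Set.range fun t : involutions G => φ t)).ncard := by
          rw [Set.ncard_insert_of_notMem hne, Set.ncard_range_of_injective hinj, h3]
      _ ≤ (H : Set (Equiv.Perm (involutions G))).ncard := Set.ncard_le_ncard hsub
      _ = Nat.card H := Nat.card_coe_set_eq _
  have h6 : Nat.card (Equiv.Perm (involutions G)) = 6 := by rw [Nat.card_perm, h3]; rfl
  have hdvd : Nat.card H ∣ 6 := h6 ▸ card_subgroup_dvd_card H
  apply eq_top_of_card_eq
  have := Nat.le_of_dvd (by norm_num) hdvd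
  interval_cases Nat.card H <;> omega

theorem card_closure_involutions_le : Nat.card (closure (involutions G : Set G)) ≤ 6 := by
  obtain ⟨a, b, c, hab, -, -, hI⟩ := Set.ncard_eq_three.mp
    (show (involutions G : Set G).ncard = 3 from (Nat.card_coe_set_eq _).symm.trans h3)
  have hmem {x : G} : x ∈ involutions G ↔ x = a ∨ x = b ∨ x = c := by
    rw [← SetLike.mem_coe, hI]; simp
  have ha : orderOf a = 2 := hmem.mpr (Or.inl rfl)
  have hb : orderOf b = 2 := hmem.mpr (Or.inr (Or.inl rfl))
  have hcomm : ¬Commute a b := fun h => hab (eq_of_commute_of_orderOf_eq_two h4 ha hb h)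
  have hc : c = a * b * a⁻¹ := by
    rcases hmem.mp ((involutions G).smul_mem (MulAut.conj a) hb) with h | h | h
    · exact absurd (mul_left_cancel (mul_inv_eq_iff_eq_mul.mp h)) hab.symm
    · exact absurd (mul_inv_eq_iff_eq_mul.mp h) hcomm
    · exact h.symm
  have hle : closure (involutions G : Set G) ≤ closure {a, b} := by
    have ha' : a ∈ closure {a, b} := subset_closure (Or.inl rfl)
    have hb' : b ∈ closure {a, b} := subset_closure (Or.inr rfl)
    rw [closure_le, hI, Set.insert_subset_iff, Set.insert_subset_iff, Set.singleton_subset_iff,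
      hc]
    exact ⟨ha', hb', mul_mem (mul_mem ha' hb') (inv_mem ha')⟩
  calc Nat.card (closure (involutions G : Set G))
      ≤ Nat.card (closure {a, b}) := card_le_of_le hle
    _ ≤ 2 * orderOf (a * b) := card_closure_pair_le (orderOf_eq_two_iff_mul_self.mp ha).1
      (orderOf_eq_two_iff_mul_self.mp hb).1
    _ ≤ 2 * 3 := by
      gcongr
      exact h3 ▸ orderOf_mul_le_card_involutions ha hb hcomm

theorem bijective_conjInvolutions_domRestrict :
    Function.Bijective ((conjInvolutions G).domRestrict (closure (involutions G : Set G))) := by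
  refine Function.Surjective.bijective_of_nat_card_le ?_ ?_
  · rw [← MonoidHom.range_eq_top, MonoidHom.domRestrict_range]
    exact map_closure_involutions_eq_top h4 h3
  · rw [Nat.card_perm, h3]
    exact card_closure_involutions_le h4 h3

end ThreeInvolutions

end

theorem stmt_2 {G : Type*} [Group G] [Finite G] (hG : IsThreePyramidal G)
    (hord : Nat.card G % 4 = 2)
    (K C : Subgroup G)
    (hK : K = Subgroup.closure {g : G | orderOf g = 2})
    (hC : C = Subgroup.centralizer (K : Set G)) :
    Nonempty (K ≃* Equiv.Perm (Fin 3)) ∧ Nonempty (G ≃* C × K) := by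
  subst hK hC
  have h4 : ¬ 4 ∣ Nat.card G := by omega
  have h3 : Nat.card (involutions G) = 3 := hG.1
  have hbij := bijective_conjInvolutions_domRestrict h4 h3
  exact ⟨⟨(MulEquiv.ofBijective _ hbij).trans (Finite.equivFinOfCardEq h3).permCongrHom⟩,
    nonempty_mulEquiv_centralizer_prod _ hbij ker_conjInvolutions⟩
end

section
/- Let G be a finite 3-pyramidal group and let H be a normal subgroup of G whose order is a power of 2, say |H| = 2^m. Then m is even. -/
lemma perm3_aux {α : Type*} (h3 : Nat.card α = 3) (σ : Equiv.Perm α) (x : α)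
    (hx : σ x = x) (hσ : σ ^ 3 = 1) : σ = 1 := by
  have hfin : Finite α := Nat.finite_of_card_ne_zero (by omega)
  obtain ⟨e⟩ : Nonempty (α ≃ Fin 3) := ⟨Finite.equivFinOfCardEq h3⟩
  have hs3 : ∀ z, σ (σ (σ z)) = z := by
    intro z
    have := Equiv.ext_iff.mp hσ z
    simpa [pow_succ, Equiv.Perm.mul_apply] using this
  set τ : Equiv.Perm (Fin 3) := (e.symm.trans (σ.trans e)) with hτdef
  have key : ∀ τ : Equiv.Perm (Fin 3), (∀ y, τ (τ (τ y)) = y) → (∃ z, τ z = z) →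
      ∀ y, τ y = y := by decide
  have h1 : ∀ y, τ (τ (τ y)) = y := by
    intro y
    simp [hτdef, Equiv.trans_apply, hs3]
  have h2 : ∃ z, τ z = z := ⟨e x, by simp [hτdef, Equiv.trans_apply, hx]⟩
  have hall := key τ h1 h2
  ext a
  have := hall (e a)
  simp [hτdef, Equiv.trans_apply] at this
  simpa using this

lemma even_of_three_dvd_pow {m : ℕ} (h : (3:ℕ) ∣ 2 ^ m - 1) : Even m := by
  rcases Nat.even_or_odd m with he | ho
  · exact he
  · exfalso
    obtain ⟨k, rfl⟩ := ho
    have h4 : (4:ℕ) ^ k % 3 = 1 := by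
      rw [Nat.pow_mod]; simp
    have h2 : (2:ℕ) ^ (2 * k + 1) = 2 * 4 ^ k := by
      rw [pow_succ, pow_mul]; ring
    rw [h2] at h
    omega

lemma orderOf_conj' {G : Type*} [Group G] (c x : G) :
    orderOf (c * x * c⁻¹) = orderOf x := by
  have h : SemiconjBy c x (c * x * c⁻¹) := by
    unfold SemiconjBy; group
  exact (h.orderOf_eq c).symm

def conjPermHom (G : Type*) [Group G] : G →* Equiv.Perm {x : G // orderOf x = 2} where
  toFun c :=
    { toFun := fun x => ⟨c * x * c⁻¹, by rw [orderOf_conj', x.2]⟩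
      invFun := fun x => ⟨c⁻¹ * x * c, by
        rw [show c⁻¹ * (x:G) * c = c⁻¹ * (x:G) * c⁻¹⁻¹ by group, orderOf_conj', x.2]⟩
      left_inv := fun x => by ext; simp; group
      right_inv := fun x => by ext; simp; group }
  map_one' := by ext x; simp
  map_mul' a b := by
    ext x
    simp [Equiv.Perm.mul_apply, mul_assoc]

theorem stmt_4 {G : Type*} [Group G] [Finite G] (hG : IsThreePyramidal G)
    (H : Subgroup G) [H.Normal] (m : ℕ) (hH : Nat.card H = 2 ^ m) :
    Even m := by
  classical
  obtain ⟨hcard3, hconj⟩ := hG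
  have hIcard : Nat.card {x : G // orderOf x = 2} = 3 := hcard3
  have hIfin : Finite {x : G // orderOf x = 2} := Subtype.finite
  have hIne : Nonempty {x : G // orderOf x = 2} := by
    have := Nat.card_ne_zero.mp (by omega : Nat.card {x : G // orderOf x = 2} ≠ 0)
    exact this.1
  obtain ⟨i⟩ := hIne
  set φ := conjPermHom G with hφdef
  set Q := φ.range with hQdef
  -- the orbit of i under Q is everything
  have horb : MulAction.orbit Q i = Set.univ := by
    ext j
    simp only [Set.mem_univ, iff_true]
    obtain ⟨c, hc⟩ := isConj_iff.mp (hconj i j i.2 j.2)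
    refine ⟨⟨φ c, ⟨c, rfl⟩⟩, ?_⟩
    show φ c • i = j
    rw [Equiv.Perm.smul_def]
    exact Subtype.ext hc
  have h3Q : 3 ∣ Nat.card Q := by
    have e1 : Nat.card (MulAction.orbit Q i) = 3 := by
      rw [horb, Nat.card_congr (Equiv.Set.univ _), hIcard]
    have e2 := Nat.card_congr (MulAction.orbitEquivQuotientStabilizer Q i)
    rw [e1] at e2
    exact e2 ▸ Subgroup.card_quotient_dvd_card _
  obtain ⟨ρ, hρ⟩ := exists_prime_orderOf_dvd_card' 3 h3Q
  obtain ⟨h, hhρ⟩ := ρ.2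
  have hρG : orderOf (ρ : Equiv.Perm {x : G // orderOf x = 2}) = 3 :=
    (Subgroup.orderOf_coe ρ).trans hρ
  -- extract a 3-element
  set n := orderOf h with hndef
  have hn0 : n ≠ 0 := (orderOf_pos h).ne'
  set v := n.factorization 3 with hvdef
  set k := n / 3 ^ v with hkdef
  have hkn : 3 ^ v * k = n := Nat.ordProj_mul_ordCompl_eq_self n 3
  have h3k : ¬ (3 ∣ k) := Nat.not_dvd_ordCompl (by norm_num) hn0
  set g := h ^ k with hgdef
  have hg3v : g ^ (3 ^ v) = 1 := by
    rw [hgdef, ← pow_mul, mul_comm, hkn, hndef, pow_orderOf_eq_one]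
  set σ := φ g with hσdef
  have hσρ : σ = (ρ : Equiv.Perm {x : G // orderOf x = 2}) ^ k := by
    rw [hσdef, hgdef, map_pow, hhρ]
  have hσ3 : σ ^ 3 = 1 := by
    rw [hσρ, ← pow_mul, mul_comm, pow_mul, ← hρG, pow_orderOf_eq_one, one_pow]
  have hσne : σ ≠ 1 := by
    intro h1
    rw [hσρ] at h1
    exact h3k (hρG ▸ orderOf_dvd_of_pow_eq_one h1)
  -- P = zpowers g is a 3-group
  set P := Subgroup.zpowers g with hPdef
  have hP : IsPGroup 3 P := by
    intro q
    refine ⟨v, ?_⟩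
    obtain ⟨z, hz⟩ := q.2
    have : (q : G) ^ (3 ^ v) = 1 := by
      rw [← hz, ← zpow_natCast, ← zpow_mul, mul_comm, zpow_mul, zpow_natCast, hg3v, one_zpow]
    exact Subtype.ext (by rw [SubgroupClass.coe_pow, this, OneMemClass.coe_one])
  -- P acts on the nonidentity elements of H by conjugation
  letI : SMul P {x : H // x ≠ 1} := ⟨fun p x =>
    ⟨⟨(p : G) * (x : H) * (p : G)⁻¹,
      Subgroup.Normal.conj_mem ‹H.Normal› _ (x : H).2 _⟩, by
      intro hx1
      apply x.2
      have h1 : (p : G) * (x : H) * (p : G)⁻¹ = 1 := congrArg Subtype.val hx1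
      have h2 : ((x : H) : G) = 1 := by
        have := congrArg (fun y => (p : G)⁻¹ * y * (p : G)) h1
        simpa [mul_assoc] using this
      exact Subtype.ext h2⟩⟩
  have smul_def : ∀ (p : P) (x : {x : H // x ≠ 1}),
      ((p • x : {x : H // x ≠ 1}) : G) = (p : G) * (x : H) * (p : G)⁻¹ := fun _ _ => rfl
  letI : MulAction P {x : H // x ≠ 1} :=
    { one_smul := fun x => by
        apply Subtype.ext; apply Subtype.ext
        simp [smul_def]
      mul_smul := fun a b x => by
        apply Subtype.ext; apply Subtype.ext
        simp only [smul_def, Subgroup.coe_mul, mul_inv_rev]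
        group }
  have hfix : IsEmpty (MulAction.fixedPoints P {x : H // x ≠ 1}) := by
    constructor
    rintro ⟨x, hfx⟩
    have hgx : g * (x : H) * g⁻¹ = (x : H) := by
      have := hfx ⟨g, Subgroup.mem_zpowers g⟩
      have := congrArg Subtype.val (congrArg Subtype.val this)
      simpa [smul_def] using this
    set S := H ⊓ Subgroup.centralizer {g} with hSdef
    have hxS : ((x : H) : G) ∈ S := by
      refine ⟨(x : H).2, Subgroup.mem_centralizer_iff.mpr ?_⟩
      intro y hy
      rw [Set.mem_singleton_iff] at hy
      subst hy
      exact mul_inv_eq_iff_eq_mul.mp hgx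
    have hSdvd : Nat.card S ∣ 2 ^ m := hH ▸ Subgroup.card_dvd_of_le inf_le_left
    obtain ⟨s, hsle, hs⟩ := (Nat.dvd_prime_pow Nat.prime_two).mp hSdvd
    have hs0 : s ≠ 0 := by
      intro h0
      rw [h0, pow_zero] at hs
      have hbot : S = ⊥ := Subgroup.card_eq_one.mp hs
      have : ((x : H) : G) = 1 := by
        rw [hbot] at hxS
        simpa using hxS
      exact x.2 (Subtype.ext this)
    have h2S : 2 ∣ Nat.card S := hs ▸ dvd_pow_self 2 hs0
    obtain ⟨t, ht⟩ := exists_prime_orderOf_dvd_card' 2 h2S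
    have htG : orderOf ((t : G)) = 2 := (Subgroup.orderOf_coe t).trans ht
    have htc : g * (t : G) = (t : G) * g := by
      have hmem : (t : G) ∈ Subgroup.centralizer {g} := (Subgroup.mem_inf.mp t.2).2
      rw [Subgroup.mem_centralizer_iff] at hmem
      exact hmem g (Set.mem_singleton g)
    have hfixt : σ ⟨(t : G), htG⟩ = ⟨(t : G), htG⟩ := by
      apply Subtype.ext
      rw [show (σ ⟨(t : G), htG⟩ : G) = g * (t : G) * g⁻¹ from rfl, htc]
      group
    exact hσne (perm3_aux hIcard σ _ hfixt hσ3)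
  -- counting
  have hΩfin : Finite {x : H // x ≠ 1} := Subtype.finite
  have hmod := hP.card_modEq_card_fixedPoints {x : H // x ≠ 1}
  have hfc : Nat.card (MulAction.fixedPoints P {x : H // x ≠ 1}) = 0 :=
    @Nat.card_of_isEmpty _ hfix
  rw [hfc] at hmod
  have hΩcard : Nat.card {x : H // x ≠ 1} = 2 ^ m - 1 := by
    letI := Fintype.ofFinite H
    rw [Nat.card_eq_fintype_card]
    have h1 : Fintype.card {x : H // ¬ x = 1} = Fintype.card H - 1 := by
      rw [Fintype.card_subtype_compl, Fintype.card_subtype_eq]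
    have h2 : Fintype.card H = 2 ^ m := by rw [← Nat.card_eq_fintype_card, hH]
    rw [h2] at h1
    convert h1 using 2
  rw [hΩcard] at hmod
  exact even_of_three_dvd_pow (Nat.modEq_zero_iff_dvd.mp hmod)
end

section
/- If G is a finite 3-pyramidal group and H is any finite group of odd order, then the direct product G × H is 3-pyramidal. -/
theorem stmt_7 {G H : Type*} [Group G] [Finite G] [Group H] [Finite H]
    (hG : IsThreePyramidal G) (hH : Odd (Nat.card H)) :
    IsThreePyramidal (G × H) := by
  have key : ∀ x : G × H, orderOf x = 2 ↔ orderOf x.1 = 2 ∧ x.2 = 1 := by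
    intro ⟨g, h⟩
    constructor
    · intro hx
      rw [Prod.orderOf] at hx
      have hdvd : orderOf h ∣ 2 := hx ▸ Nat.dvd_lcm_right _ _
      have hodd : Odd (orderOf h) := hH.of_dvd_nat (orderOf_dvd_natCard h)
      have h1 : orderOf h = 1 := by
        rcases (Nat.dvd_prime Nat.prime_two).mp hdvd with h1 | h2
        · exact h1
        · exact absurd (h2 ▸ hodd) (by decide)
      refine ⟨?_, orderOf_eq_one_iff.mp h1⟩
      rw [h1, Nat.lcm_one_right] at hx
      exact hx
    · rintro ⟨hg, rfl⟩
      rw [Prod.orderOf, orderOf_one, Nat.lcm_one_right, hg]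
  constructor
  · rw [← hG.1]
    apply Nat.card_congr
    refine ⟨fun x => ⟨x.1.1, ((key x.1).mp x.2).1⟩,
      fun g => ⟨(g.1, 1), (key (g.1, 1)).mpr ⟨g.2, rfl⟩⟩, ?_, ?_⟩
    · rintro ⟨⟨g, h⟩, hx⟩
      obtain ⟨_, rfl⟩ := (key _).mp hx
      rfl
    · rintro ⟨g, hg⟩
      rfl
  · intro i j hi hj
    obtain ⟨hi1, hi2⟩ := (key i).mp hi
    obtain ⟨hj1, hj2⟩ := (key j).mp hj
    have := (MonoidHom.inl G H).map_isConj (hG.2 i.1 j.1 hi1 hj1)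
    have heq : ∀ x : G × H, x.2 = 1 → (MonoidHom.inl G H) x.1 = x := by
      rintro ⟨a, b⟩ rfl; rfl
    rwa [heq i hi2, heq j hj2] at this
end

section
/- Let X be a finite almost-simple group with socle S, i.e., S is a normal subgroup of X that is a nonabelian simple group and the centralizer of S in X is trivial. Let H be a maximal subgroup of S that is X-ordinary, meaning that for every x in X there exists s in S with x H x^{-1} = s H s^{-1}. Then the normalizer N_X(H) of H in X is a maximal subgroup of X, and N_X(H) ∩ S = H. -/
/-!
A maximal subgroup `H` of a nonabelian simple group `S` is not normal in `S`, so `S ⊄ N_X(H)`,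
and maximality of `H` in `S` forces `N_X(H) ∩ S = H`. Ordinarity says that every `x ∈ X` lies
in `S · N_X(H)` (a Frattini argument). If `N_X(H) < K`, an element of `K \ N_X(H)` has the form
`s n` with `s ∈ (K ∩ S) \ H`; so `K ∩ S` properly contains `H`, whence `S ≤ K` and
`K ⊇ S · N_X(H) = X`.
-/

/-- The conjugate `x H x⁻¹` of a subgroup `H` by an element `x`. -/
def conjSubgroup {X : Type*} [Group X] (x : X) (H : Subgroup X) : Subgroup X :=
  H.map (MulAut.conj x).toMonoidHom

open Subgroup Pointwise

theorem conjSubgroup_eq_toConjAct_smul {X : Type*} [Group X] (x : X) (H : Subgroup X) :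
    conjSubgroup x H = ConjAct.toConjAct x • H :=
  rfl

theorem conjSubgroup_eq_conjSubgroup_iff {X : Type*} [Group X] {x y : X} {H : Subgroup X} :
    conjSubgroup x H = conjSubgroup y H ↔ y⁻¹ * x ∈ normalizer (H : Set X) := by
  rw [← conjAct_pointwise_smul_iff, map_mul, map_inv, mul_smul, inv_smul_eq_iff,
    ← conjSubgroup_eq_toConjAct_smul, ← conjSubgroup_eq_toConjAct_smul]

theorem isCyclic_of_isCoatom_bot {G : Type*} [Group G] (h : IsCoatom (⊥ : Subgroup G)) :
    IsCyclic G := by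
  have : Nontrivial G := nontrivial_iff.1 ⟨⊥, ⊤, h.1⟩
  obtain ⟨g, hg⟩ := exists_ne (1 : G)
  exact ⟨g, (eq_top_iff' _).1 (h.2 _ (bot_lt_iff_ne_bot.2 (zpowers_ne_bot.2 hg)))⟩

theorem IsSimpleGroup.not_normal_of_isCoatom {G : Type*} [Group G] [IsSimpleGroup G]
    (hnc : ∃ a b : G, a * b ≠ b * a) {M : Subgroup G} (hM : IsCoatom M) : ¬ M.Normal := by
  intro hMn
  obtain ⟨a, b, hab⟩ := hnc
  rcases hMn.eq_bot_or_eq_top with rfl | rfl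
  · have := isCyclic_of_isCoatom_bot hM
    exact hab (IsCyclic.commGroup.mul_comm a b)
  · exact hM.1 rfl

section MaximalSubgroupOf

variable {X : Type*} [Group X] {S H K : Subgroup X}

theorem inf_eq_or_le_of_isCoatom_subgroupOf (hHS : H ≤ S) (hmax : IsCoatom (H.subgroupOf S))
    (hHK : H ≤ K) : K ⊓ S = H ∨ S ≤ K := by
  rcases (subgroupOf_mono S hHK).eq_or_lt with heq | hlt
  · left
    rwa [eq_comm, subgroupOf_inj, inf_of_le_left hHS] at heq
  · exact Or.inr (subgroupOf_eq_top.1 (hmax.2 _ hlt))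

theorem not_le_normalizer_of_isCoatom_subgroupOf (hsimple : IsSimpleGroup S)
    (hnc : ∃ a b : S, a * b ≠ b * a) (hHS : H ≤ S) (hmax : IsCoatom (H.subgroupOf S)) :
    ¬ S ≤ normalizer (H : Set X) := fun hle =>
  hsimple.not_normal_of_isCoatom hnc hmax ((normal_subgroupOf_iff_le_normalizer hHS).2 hle)

theorem normalizer_inf_eq_of_isCoatom_subgroupOf (hHS : H ≤ S)
    (hmax : IsCoatom (H.subgroupOf S)) (hSN : ¬ S ≤ normalizer (H : Set X)) :
    normalizer (H : Set X) ⊓ S = H :=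
  (inf_eq_or_le_of_isCoatom_subgroupOf hHS hmax le_normalizer).resolve_right hSN

theorem isCoatom_normalizer_of_exists_inv_mul_mem_normalizer (hHS : H ≤ S)
    (hmax : IsCoatom (H.subgroupOf S)) (hSN : ¬ S ≤ normalizer (H : Set X))
    (hfrattini : ∀ x : X, ∃ s ∈ S, s⁻¹ * x ∈ normalizer (H : Set X)) :
    IsCoatom (normalizer (H : Set X)) := by
  refine ⟨fun htop => hSN (htop ▸ le_top), fun K hK => ?_⟩
  rcases inf_eq_or_le_of_isCoatom_subgroupOf hHS hmax (le_normalizer.trans hK.le) with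
    hKS | hSK
  · exfalso
    obtain ⟨k, hkK, hkN⟩ := SetLike.exists_of_lt hK
    obtain ⟨s, hsS, hsk⟩ := hfrattini k
    have hsK : s ∈ K := by simpa using mul_mem hkK (inv_mem (hK.le hsk))
    have hsH : s ∈ H := hKS ▸ mem_inf.2 ⟨hsK, hsS⟩
    exact hkN (by simpa using mul_mem (le_normalizer hsH) hsk)
  · refine eq_top_iff.2 fun x _ => ?_
    obtain ⟨s, hsS, hsx⟩ := hfrattini x
    simpa using mul_mem (hSK hsS) (hK.le hsx)

end MaximalSubgroupOf

theorem stmt_9_general {X : Type*} [Group X] (S : Subgroup X)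
    (hsimple : IsSimpleGroup S) (hnonab : ∃ a b : S, a * b ≠ b * a)
    (H : Subgroup X) (hHS : H ≤ S) (hmax : IsCoatom (H.subgroupOf S))
    (hord : ∀ x : X, ∃ s ∈ S, conjSubgroup x H = conjSubgroup s H) :
    IsCoatom (Subgroup.normalizer (H : Set X)) ∧ Subgroup.normalizer (H : Set X) ⊓ S = H := by
  have hSN := not_le_normalizer_of_isCoatom_subgroupOf hsimple hnonab hHS hmax
  have hfrattini (x : X) : ∃ s ∈ S, s⁻¹ * x ∈ normalizer (H : Set X) := by
    obtain ⟨s, hsS, hs⟩ := hord x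
    exact ⟨s, hsS, conjSubgroup_eq_conjSubgroup_iff.1 hs⟩
  exact ⟨isCoatom_normalizer_of_exists_inv_mul_mem_normalizer hHS hmax hSN hfrattini,
    normalizer_inf_eq_of_isCoatom_subgroupOf hHS hmax hSN⟩

theorem stmt_9 {X : Type*} [Group X] [Finite X] (S : Subgroup X) [S.Normal]
    (hsimple : IsSimpleGroup S) (hnonab : ∃ a b : S, a * b ≠ b * a)
    (hcent : Subgroup.centralizer (S : Set X) = ⊥)
    (H : Subgroup X) (hHS : H ≤ S) (hmax : IsCoatom (H.subgroupOf S))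
    (hord : ∀ x : X, ∃ s ∈ S, conjSubgroup x H = conjSubgroup s H) :
    IsCoatom (Subgroup.normalizer (H : Set X)) ∧ Subgroup.normalizer (H : Set X) ⊓ S = H :=
  stmt_9_general S hsimple hnonab H hHS hmax hord
end

section
/- Let X be a finite almost-simple group with socle S, i.e., S is a normal subgroup of X that is a nonabelian simple group and the centralizer of S in X is trivial. Let H be a maximal subgroup of S, and suppose that the set {φ(H) : φ an automorphism of S} of images of H under automorphisms of S is the union of exactly two conjugacy classes of subgroups of S under conjugation by elements of S. If X has no normal subgroup of index 2, then H is X-ordinary, i.e., for every x in X there exists s in S with x H x^{-1} = s H s^{-1}. -/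
/-- The conjugacy class of a subgroup `K` of a group `S`. -/
def subgroupClass {S : Type*} [Group S] (K : Subgroup S) : Set (Subgroup S) :=
  {K' : Subgroup S | ∃ s : S, K' = conjSubgroup s K}

section Aux

variable {G : Type*} [Group G]

lemma conjSubgroup_one' (K : Subgroup G) : conjSubgroup (1 : G) K = K := by
  unfold conjSubgroup
  ext x
  simp [Subgroup.mem_map]

lemma conjSubgroup_conjSubgroup (a b : G) (K : Subgroup G) :
    conjSubgroup a (conjSubgroup b K) = conjSubgroup (a * b) K := by
  unfold conjSubgroup
  rw [Subgroup.map_map]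
  congr 1
  ext x
  simp [mul_assoc]

lemma map_one_mulaut (K : Subgroup G) : K.map (1 : MulAut G).toMonoidHom = K := by
  ext x; simp [Subgroup.mem_map]

lemma map_mulaut_mul (φ₁ φ₂ : MulAut G) (K : Subgroup G) :
    K.map (φ₁ * φ₂).toMonoidHom = (K.map φ₂.toMonoidHom).map φ₁.toMonoidHom := by
  rw [Subgroup.map_map]
  rfl

lemma map_conjSubgroup (φ : G ≃* G) (s : G) (K : Subgroup G) :
    (conjSubgroup s K).map φ.toMonoidHom = conjSubgroup (φ s) (K.map φ.toMonoidHom) := by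
  unfold conjSubgroup
  rw [Subgroup.map_map, Subgroup.map_map]
  congr 1
  ext x
  simp

lemma mem_class_self (K : Subgroup G) : K ∈ subgroupClass K :=
  ⟨1, (conjSubgroup_one' K).symm⟩

lemma mem_class_conj (t : G) (K : Subgroup G) : conjSubgroup t K ∈ subgroupClass K :=
  ⟨t, rfl⟩

lemma mem_class_trans {K K' K'' : Subgroup G} (h : K' ∈ subgroupClass K)
    (h2 : K'' ∈ subgroupClass K') : K'' ∈ subgroupClass K := by
  obtain ⟨s, rfl⟩ := h
  obtain ⟨t, rfl⟩ := h2
  exact ⟨t * s, (conjSubgroup_conjSubgroup t s K)⟩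

lemma mem_class_symm {K K' : Subgroup G} (h : K' ∈ subgroupClass K) :
    K ∈ subgroupClass K' := by
  obtain ⟨s, rfl⟩ := h
  exact ⟨s⁻¹, by rw [conjSubgroup_conjSubgroup, inv_mul_cancel, conjSubgroup_one']⟩

lemma class_eq_of_mem {K K' : Subgroup G} (h : K' ∈ subgroupClass K) :
    subgroupClass K' = subgroupClass K :=
  Set.ext fun u => ⟨fun hu => mem_class_trans h hu,
    fun hu => mem_class_trans (mem_class_symm h) hu⟩

lemma map_mem_class (φ : G ≃* G) {K K' : Subgroup G} (h : K' ∈ subgroupClass K) :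
    K'.map φ.toMonoidHom ∈ subgroupClass (K.map φ.toMonoidHom) := by
  obtain ⟨s, rfl⟩ := h
  exact ⟨φ s, by rw [map_conjSubgroup]⟩

lemma map_symm_map (φ : G ≃* G) (K : Subgroup G) :
    (K.map φ.toMonoidHom).map φ.symm.toMonoidHom = K := by
  rw [Subgroup.map_map]
  have : φ.symm.toMonoidHom.comp φ.toMonoidHom = MonoidHom.id G := by
    ext x; simp
  rw [this, Subgroup.map_id]

lemma rel_of_map_rel (φ : G ≃* G) {K K' : Subgroup G}
    (h : K.map φ.toMonoidHom ∈ subgroupClass (K'.map φ.toMonoidHom)) :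
    K ∈ subgroupClass K' := by
  have := map_mem_class φ.symm h
  rwa [map_symm_map, map_symm_map] at this

end Aux

theorem stmt_10 {X : Type*} [Group X] [Finite X] (S : Subgroup X) [S.Normal]
    (hsimple : IsSimpleGroup S) (hnonab : ∃ a b : S, a * b ≠ b * a)
    (hcent : Subgroup.centralizer (S : Set X) = ⊥)
    (H : Subgroup S) (hmax : IsCoatom H)
    (hc2 : ∃ K₁ K₂ : Subgroup S, subgroupClass K₁ ≠ subgroupClass K₂ ∧
      {K : Subgroup S | ∃ φ : MulAut S, K = H.map φ.toMonoidHom} =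
        subgroupClass K₁ ∪ subgroupClass K₂)
    (hno2 : ∀ N : Subgroup X, N.Normal → N.index ≠ 2) :
    ∀ x : X, ∃ s ∈ S, conjSubgroup x (H.map S.subtype) = conjSubgroup s (H.map S.subtype) := by
  classical
  obtain ⟨K₁, K₂, hK12, hunion⟩ := hc2
  set ψ : X →* MulAut S := MulAut.conjNormal with hψdef
  -- H is in the automorphism orbit set
  have hHself : H ∈ {K : Subgroup S | ∃ φ : MulAut S, K = H.map φ.toMonoidHom} :=
    ⟨1, (map_one_mulaut H).symm⟩
  have horb0 : ∀ φ : MulAut S,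
      H.map φ.toMonoidHom ∈ subgroupClass K₁ ∪ subgroupClass K₂ := by
    intro φ
    rw [← hunion]
    exact ⟨φ, rfl⟩
  -- Obtain K' with the normalized properties
  obtain ⟨K', φ₀, hK'eq, hne, horb⟩ :
      ∃ (K' : Subgroup S) (φ₀ : MulAut S), K' = H.map φ₀.toMonoidHom ∧
        H ∉ subgroupClass K' ∧
        ∀ φ : MulAut S, H.map φ.toMonoidHom ∈ subgroupClass H ∪ subgroupClass K' := by
    have hH12 : H ∈ subgroupClass K₁ ∪ subgroupClass K₂ := by
      rw [← hunion]; exact hHself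
    rcases hH12 with hc | hc
    · -- class H = class K₁, take K' = K₂
      have hcH : subgroupClass H = subgroupClass K₁ := class_eq_of_mem hc
      have hK₂ : K₂ ∈ {K : Subgroup S | ∃ φ : MulAut S, K = H.map φ.toMonoidHom} := by
        rw [hunion]; exact Or.inr (mem_class_self K₂)
      obtain ⟨φ₀, hφ₀⟩ := hK₂
      refine ⟨K₂, φ₀, hφ₀, ?_, ?_⟩
      · intro hmem
        exact hK12 (hcH ▸ class_eq_of_mem hmem ▸ rfl)
      · intro φ
        have := horb0 φ
        rwa [← hcH] at this
    · -- class H = class K₂, take K' = K₁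
      have hcH : subgroupClass H = subgroupClass K₂ := class_eq_of_mem hc
      have hK₁ : K₁ ∈ {K : Subgroup S | ∃ φ : MulAut S, K = H.map φ.toMonoidHom} := by
        rw [hunion]; exact Or.inl (mem_class_self K₁)
      obtain ⟨φ₀, hφ₀⟩ := hK₁
      refine ⟨K₁, φ₀, hφ₀, ?_, ?_⟩
      · intro hmem
        exact hK12 ((class_eq_of_mem hmem).symm.trans hcH)
      · intro φ
        have := horb0 φ
        rw [← hcH] at this
        exact this.symm
  -- notation
  set A : X → Subgroup S := fun x => H.map (ψ x).toMonoidHom with hAdef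
  have h_comp : ∀ x y : X, A (x * y) = (A y).map (ψ x).toMonoidHom := by
    intro x y
    show H.map (ψ (x * y)).toMonoidHom = _
    rw [map_mul, map_mulaut_mul]
  -- the core contradiction lemma
  have hcore : ∀ x : X,
      H.map (ψ x).toMonoidHom ∈ subgroupClass (H.map ((ψ x) * φ₀).toMonoidHom) → False := by
    intro x h
    rw [map_mulaut_mul, ← hK'eq] at h
    exact hne (rel_of_map_rel (ψ x : S ≃* S) h)
  set P : X → Prop := fun x => A x ∈ subgroupClass H with hPdef
  have horbA : ∀ x : X, A x ∈ subgroupClass H ∪ subgroupClass K' := fun x => horb (ψ x)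
  have P1 : P 1 := by
    show H.map (ψ 1).toMonoidHom ∈ subgroupClass H
    rw [map_one, map_one_mulaut]
    exact mem_class_self H
  have rule1 : ∀ x y : X, P y → (P (x * y) ↔ P x) := by
    intro x y hy
    obtain ⟨s, hs⟩ := hy
    have key : A (x * y) = conjSubgroup ((ψ x) s) (A x) := by
      rw [h_comp, hs, map_conjSubgroup]
    constructor
    · intro hxy
      have : A x ∈ subgroupClass (A (x * y)) := by
        rw [key]
        exact mem_class_symm (mem_class_conj _ _)
      exact mem_class_trans hxy this
    · intro hx
      have : A (x * y) ∈ subgroupClass (A x) := key ▸ mem_class_conj _ _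
      exact mem_class_trans hx this
  -- when ¬ P y, express A (x*y)
  have expand : ∀ x y : X, ¬ P y →
      ∃ t : S, A (x * y) = conjSubgroup t (H.map ((ψ x) * φ₀).toMonoidHom) := by
    intro x y hy
    have hyK' : A y ∈ subgroupClass K' := (horbA y).resolve_left hy
    obtain ⟨s, hs⟩ := hyK'
    refine ⟨(ψ x) s, ?_⟩
    rw [h_comp, hs, map_conjSubgroup, hK'eq, ← map_mulaut_mul]
  have rule3 : ∀ x y : X, P x → ¬ P y → ¬ P (x * y) := by
    intro x y hx hy hxy
    obtain ⟨t, ht⟩ := expand x y hy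
    set B := H.map ((ψ x) * φ₀).toMonoidHom with hBdef
    have hB : B ∈ subgroupClass H := by
      have h1 : B ∈ subgroupClass (A (x * y)) := by
        rw [ht]; exact mem_class_symm (mem_class_conj _ _)
      exact mem_class_trans hxy h1
    -- P x : A x ∈ class H, so A x ∈ class B
    have : A x ∈ subgroupClass B :=
      mem_class_trans (mem_class_symm hB) hx
    exact hcore x this
  have rule2 : ∀ x y : X, ¬ P x → ¬ P y → P (x * y) := by
    intro x y hx hy
    obtain ⟨t, ht⟩ := expand x y hy
    set B := H.map ((ψ x) * φ₀).toMonoidHom with hBdef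
    have hBorb : B ∈ subgroupClass H ∪ subgroupClass K' := horb _
    rcases hBorb with hB | hB
    · show A (x * y) ∈ subgroupClass H
      rw [ht]
      exact mem_class_trans hB (mem_class_conj _ _)
    · exfalso
      have hxK' : A x ∈ subgroupClass K' := (horbA x).resolve_left hx
      have : A x ∈ subgroupClass B :=
        mem_class_trans (mem_class_symm hB) hxK'
      exact hcore x this
  have Pinv : ∀ x : X, P x → P x⁻¹ := by
    intro x hx
    by_contra hxi
    exact rule3 x x⁻¹ hx hxi (by rw [mul_inv_cancel]; exact P1)
  have Pmul : ∀ x y : X, P x → P y → P (x * y) := fun x y hx hy =>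
    (rule1 x y hy).mpr hx
  -- the subgroup N
  let N : Subgroup X :=
    { carrier := {x | P x}
      one_mem' := P1
      mul_mem' := fun {a b} ha hb => Pmul a b ha hb
      inv_mem' := fun {a} ha => Pinv a ha }
  have hNmem : ∀ x : X, x ∈ N ↔ P x := fun x => Iff.rfl
  have hNnormal : N.Normal := by
    constructor
    intro n hn g
    by_cases hg : P g
    · have h1 : P (g * n) := Pmul g n hg hn
      exact (rule1 (g * n) g⁻¹ (Pinv g hg)).mpr h1
    · have hginv : ¬ P g⁻¹ := fun h => hg (by simpa using Pinv g⁻¹ h)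
      have h1 : ¬ P (g * n) := fun h => hg ((rule1 g n hn).mp h)
      exact rule2 (g * n) g⁻¹ h1 hginv
  -- everything is in N
  have hall : ∀ x : X, P x := by
    by_contra hcon
    push_neg at hcon
    obtain ⟨x₀, hx₀⟩ := hcon
    have hidx : N.index = 2 := by
      rw [Subgroup.index_eq_two_iff]
      refine ⟨x₀, fun b => ?_⟩
      by_cases hb : P b
      · exact Or.inr ⟨hb, rule3 b x₀ hb hx₀⟩
      · exact Or.inl ⟨rule2 b x₀ hb hx₀, hb⟩
    exact hno2 N hNnormal hidx
  -- bridging lemmas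
  have bridge1 : ∀ (x : X) (K : Subgroup S),
      conjSubgroup x (K.map S.subtype) = (K.map (ψ x).toMonoidHom).map S.subtype := by
    intro x K
    unfold conjSubgroup
    ext y
    simp only [Subgroup.mem_map, MulEquiv.coe_toMonoidHom, MulAut.conj_apply,
      Subgroup.coe_subtype, exists_exists_and_eq_and]
    constructor
    · rintro ⟨k, hk, rfl⟩
      exact ⟨k, hk, (MulAut.conjNormal_apply x k)⟩
    · rintro ⟨k, hk, hky⟩
      exact ⟨k, hk, by rw [← hky, MulAut.conjNormal_apply]⟩
  have bridge2 : ∀ (s : S) (K : Subgroup S),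
      conjSubgroup (s : X) (K.map S.subtype) = (conjSubgroup s K).map S.subtype := by
    intro s K
    unfold conjSubgroup
    ext y
    simp only [Subgroup.mem_map, MulEquiv.coe_toMonoidHom, MulAut.conj_apply,
      Subgroup.coe_subtype, exists_exists_and_eq_and]
    constructor
    · rintro ⟨k, hk, rfl⟩
      exact ⟨k, hk, by push_cast; ring_nf⟩
    · rintro ⟨k, hk, hky⟩
      refine ⟨k, hk, ?_⟩
      rw [← hky]
      push_cast
      ring_nf
  -- conclude
  intro x
  obtain ⟨s, hs⟩ := hall x
  refine ⟨(s : X), s.2, ?_⟩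
  rw [bridge1 x H, bridge2 s H]
  show (A x).map S.subtype = _
  rw [hs]
end

section
/- For every integer m ≥ 1, every subgroup of order 3 of the automorphism group of N = Z/2^m Z × Z/2^m Z is conjugate in Aut(N) to the subgroup generated by the automorphism γ of N defined by γ(a,b) = (b, -(a+b)). -/
/-- The automorphism γ of `ZMod (2^m) × ZMod (2^m)` sending `(a, b)` to `(b, -(a+b))`. -/
def pyrGamma (m : ℕ) : AddAut (ZMod (2 ^ m) × ZMod (2 ^ m)) where
  toFun p := (p.2, -(p.1 + p.2))
  invFun p := (-(p.1 + p.2), p.1)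
  left_inv p := by
    obtain ⟨a, b⟩ := p
    simp only [Prod.mk.injEq]
    constructor <;> first | trivial | ring
  right_inv p := by
    obtain ⟨a, b⟩ := p
    simp only [Prod.mk.injEq]
    constructor <;> first | trivial | ring
  map_add' p q := by
    simp only [Prod.fst_add, Prod.snd_add, Prod.mk.injEq, Prod.mk_add_mk]
    constructor <;> first | trivial | ring

/-- γ as a multiplicative automorphism of the corresponding multiplicative group. -/
def pyrGammaMul (m : ℕ) : MulAut (Multiplicative (ZMod (2 ^ m) × ZMod (2 ^ m))) :=
  AddEquiv.toMultiplicative (pyrGamma m)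

/-!
Let `g` generate a subgroup of order 3 of `Aut N`, `N = (ℤ/2^m)²`. If `g` fixed a nonzero
vector, it would fix one of order 2; as the 2-torsion of `N` has only four elements, `g` would then
fix all of it, and an automorphism of order 3 of a 2-group fixing its 2-torsion is trivial. So `g`
has no nonzero fixed points, and `(g - 1)(g² + g + 1) = 0` gives `g² + g + 1 = 0`. Modulo 2, `g`
cannot fix `e = (1, 0)`, since that would make `3e` even; hence `e` and `g e` form a basis, and in
the basis `(e, -g e)` the matrix of `g` is that of `γ`.
-/

lemma Even.prodMk {α β : Type*} [Add α] [Add β] {a : α} {b : β} (ha : Even a) (hb : Even b) :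
    Even (a, b) := by
  obtain ⟨r, rfl⟩ := ha
  obtain ⟨s, rfl⟩ := hb
  exact ⟨(r, s), rfl⟩

namespace AddAut

variable {G : Type*} [AddCommGroup G] {g : AddAut G}

lemma apply_apply_apply_of_three_nsmul_eq_zero (hg : 3 • g = 0) (x : G) : g (g (g x)) = x := by
  simpa [succ_nsmul, add_apply] using congr($hg x)

lemma eq_zero_of_apply_eq_add (hg : 3 • g = 0) {v x : G} (hgv : g v = v) (hv : v + v = 0)
    (hgx : g x = v + x) : v = 0 := by
  have hggx : g (g x) = x := by rw [hgx, map_add, hgv, hgx, ← add_assoc, hv, zero_add]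
  have := apply_apply_apply_of_three_nsmul_eq_zero hg x
  rw [hggx, hgx] at this
  simpa using this

/-- If `g` fixes `x + x`, then `t = g x - x` is a fixed point with `t + t = 0`, so
`g (g x) = x + t + t = x` and `g x = g (g (g x)) = x`. -/
lemma apply_eq_self_of_two_pow_nsmul_eq_zero (hg : 3 • g = 0)
    (h2 : ∀ x : G, x + x = 0 → g x = x) (k : ℕ) {x : G} (hx : 2 ^ k • x = 0) : g x = x := by
  induction k generalizing x with
  | zero => simp_all
  | succ k ih =>
    have hxx : g (x + x) = x + x :=
      ih (by rwa [smul_add, ← add_nsmul, ← two_mul, ← pow_succ'])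
    have htt : (g x - x) + (g x - x) = 0 := by
      rw [sub_add_sub_comm, ← map_add, hxx, sub_self]
    have hggx : g (g x) = x := by
      rw [show g x = x + (g x - x) by abel, map_add, h2 _ htt, ← sub_eq_zero, ← htt]
      abel
    simpa [hggx] using apply_apply_apply_of_three_nsmul_eq_zero hg x

lemma exists_two_torsion_apply_eq_self {v : G} (hgv : g v = v) (hv : v ≠ 0) (k : ℕ)
    (hk : 2 ^ k • v = 0) : ∃ w ≠ 0, w + w = 0 ∧ g w = w := by
  induction k generalizing v with
  | zero => simp_all
  | succ k ih =>
    by_cases hvv : v + v = 0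
    · exact ⟨v, hv, hvv, hgv⟩
    · refine ih (by rw [map_add, hgv]) hvv ?_
      rwa [smul_add, ← add_nsmul, ← two_mul, ← pow_succ']

lemma even_of_even_apply_sub (h0 : ∀ x, g (g x) + g x + x = 0) {x : G} (h : Even (g x - x)) :
    Even x := by
  obtain ⟨z, hz⟩ := h
  have hgx : g x = x + (z + z) := by rw [← hz]; abel
  refine ⟨-(x + z + z + g z), ?_⟩
  rw [← sub_eq_zero, ← h0 x, hgx, map_add, map_add, hgx]
  abel

end AddAut

namespace ZMod

variable {k : ℕ}

lemma two_pow_ne_zero : (2 : ZMod (2 ^ (k + 1))) ^ k ≠ 0 := by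
  have : ((2 ^ k : ℕ) : ZMod (2 ^ (k + 1))) ≠ 0 := by
    rw [Ne, natCast_eq_zero_iff, Nat.pow_dvd_pow_iff_le_right (by norm_num)]
    omega
  exact_mod_cast this

lemma two_pow_add_two_pow : (2 : ZMod (2 ^ (k + 1))) ^ k + 2 ^ k = 0 := by
  rw [← two_mul, ← pow_succ']
  exact_mod_cast natCast_self (2 ^ (k + 1))

lemma eq_zero_or_eq_two_pow_of_add_self_eq_zero {a : ZMod (2 ^ (k + 1))} (h : a + a = 0) :
    a = 0 ∨ a = 2 ^ k := by
  have hdvd : 2 ^ (k + 1) ∣ 2 * a.val := by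
    rw [← natCast_eq_zero_iff]
    push_cast
    rwa [natCast_zmod_val, two_mul]
  obtain ⟨j, hj⟩ : 2 ^ k ∣ a.val := by
    rwa [← Nat.mul_dvd_mul_iff_left two_pos, ← pow_succ']
  have hj2 : j < 2 := by
    have := a.val_lt
    rw [hj, pow_succ] at this
    exact Nat.lt_of_mul_lt_mul_left this
  rw [← natCast_zmod_val a, hj]
  interval_cases j <;> simp

lemma even_or_odd {n : ℕ} [NeZero n] (a : ZMod n) : Even a ∨ Odd a := by
  rw [← natCast_zmod_val a]
  exact (Nat.even_or_odd a.val).imp Even.natCast Odd.natCast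

lemma isUnit_of_odd {n : ℕ} {a : ZMod (2 ^ n)} (h : Odd a) : IsUnit a := by
  obtain ⟨b, rfl⟩ := h
  refine IsNilpotent.isUnit_add_one ⟨n, ?_⟩
  rw [mul_pow, show (2 : ZMod (2 ^ n)) ^ n = 0 by exact_mod_cast natCast_self (2 ^ n), zero_mul]

lemma not_even_one : ¬ Even (1 : ZMod (2 ^ (k + 1))) := fun h ↦ by
  obtain ⟨r, hr⟩ := h.map (castHom (dvd_pow_self 2 k.succ_ne_zero) (ZMod 2))
  rw [map_one] at hr
  fin_cases r <;> exact absurd hr (by decide)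

end ZMod

namespace ZModTwoPowSq

variable {k : ℕ}

local notation "N" => ZMod (2 ^ (k + 1)) × ZMod (2 ^ (k + 1))

lemma eq_zero_or_eq_or_eq_or_eq_add_of_two_torsion {v x y : N} (hv : v + v = 0)
    (hx : x + x = 0) (hy : y + y = 0) (hv0 : v ≠ 0) (hx0 : x ≠ 0) (hvx : v ≠ x) :
    y = 0 ∨ y = v ∨ y = x ∨ y = v + x := by
  obtain ⟨v₁, v₂⟩ := v
  obtain ⟨x₁, x₂⟩ := x
  obtain ⟨y₁, y₂⟩ := y
  simp only [Prod.mk_add_mk, Prod.mk_eq_zero] at hv hx hy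
  rcases ZMod.eq_zero_or_eq_two_pow_of_add_self_eq_zero hv.1 with rfl | rfl <;>
  rcases ZMod.eq_zero_or_eq_two_pow_of_add_self_eq_zero hv.2 with rfl | rfl <;>
  rcases ZMod.eq_zero_or_eq_two_pow_of_add_self_eq_zero hx.1 with rfl | rfl <;>
  rcases ZMod.eq_zero_or_eq_two_pow_of_add_self_eq_zero hx.2 with rfl | rfl <;>
  rcases ZMod.eq_zero_or_eq_two_pow_of_add_self_eq_zero hy.1 with rfl | rfl <;>
  rcases ZMod.eq_zero_or_eq_two_pow_of_add_self_eq_zero hy.2 with rfl | rfl <;>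
  simp_all [ZMod.two_pow_ne_zero, ZMod.two_pow_add_two_pow]

lemma apply_eq_self_of_two_torsion {g : AddAut N} (hg : 3 • g = 0) {v : N} (hv0 : v ≠ 0)
    (hv : v + v = 0) (hgv : g v = v) {x : N} (hx : x + x = 0) : g x = x := by
  by_cases hx0 : x = 0
  · simp [hx0]
  by_cases hvx : v = x
  · rwa [← hvx]
  have hgx : g x + g x = 0 := by rw [← map_add, hx, map_zero]
  rcases eq_zero_or_eq_or_eq_or_eq_add_of_two_torsion hv hx hgx hv0 hx0 hvx with h | h | h | h
  · exact absurd (g.injective (h.trans (map_zero g).symm)) hx0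
  · exact absurd (g.injective (h.trans hgv.symm)).symm hvx
  · exact h
  · exact absurd (AddAut.eq_zero_of_apply_eq_add hg hgv hv h) hv0

lemma eq_zero_of_apply_eq_self {g : AddAut N} (hg : 3 • g = 0) (hg0 : g ≠ 0) {v : N}
    (hgv : g v = v) : v = 0 := by
  have hexp (x : N) : 2 ^ (k + 1) • x = 0 := ZModModule.char_nsmul_eq_zero _ x
  by_contra hv0
  obtain ⟨w, hw0, hw, hgw⟩ := AddAut.exists_two_torsion_apply_eq_self hgv hv0 _ (hexp v)
  refine hg0 (AddEquiv.ext fun x ↦ ?_)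
  exact AddAut.apply_eq_self_of_two_pow_nsmul_eq_zero hg
    (fun y hy ↦ apply_eq_self_of_two_torsion hg hw0 hw hgw hy) _ (hexp x)

lemma apply_apply_add_apply_add_self {g : AddAut N} (hg : 3 • g = 0) (hg0 : g ≠ 0) (x : N) :
    g (g x) + g x + x = 0 :=
  eq_zero_of_apply_eq_self hg hg0 <| by
    rw [map_add, map_add, AddAut.apply_apply_apply_of_three_nsmul_eq_zero hg]
    abel

lemma isUnit_apply_one_zero_snd {g : AddAut N} (h0 : ∀ x, g (g x) + g x + x = 0) :
    IsUnit (g (1, 0)).2 := by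
  have h_not_even : ¬ Even ((1, 0) : N) := fun h ↦
    ZMod.not_even_one (h.map (AddMonoidHom.fst _ _))
  refine (ZMod.even_or_odd (g (1, 0)).2).elim (fun h₂ ↦ absurd ?_ h_not_even) ZMod.isUnit_of_odd
  rcases ZMod.even_or_odd (g (1, 0)).1 with h₁ | h₁
  · simpa using (h₁.prodMk h₂).map g.symm
  · refine AddAut.even_of_even_apply_sub h0 ?_
    rw [show g (1, 0) - (1, 0) = ((g (1, 0)).1 - 1, (g (1, 0)).2) by ext <;> simp]
    exact (h₁.sub_odd odd_one).prodMk h₂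

end ZModTwoPowSq

noncomputable def upperTriangularAddAut {R : Type*} [CommRing R] (p : R × R) (hp : IsUnit p.2) :
    AddAut (R × R) where
  toFun q := (q.1 + q.2 * p.1, q.2 * p.2)
  invFun q := (q.1 - q.2 * hp.unit⁻¹ * p.1, q.2 * hp.unit⁻¹)
  left_inv q := by
    ext
    · simp only
      linear_combination -(q.2 * p.1) * hp.mul_val_inv
    · simp only
      linear_combination q.2 * hp.mul_val_inv
  right_inv q := by
    ext
    · simp only
      ring
    · simp only
      linear_combination q.2 * hp.val_inv_mul
  map_add' q q' := by ext <;> simp only [Prod.fst_add, Prod.snd_add] <;> ring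

lemma upperTriangularAddAut_apply {R : Type*} [CommRing R] (p : R × R) (hp : IsUnit p.2)
    (q : R × R) : upperTriangularAddAut p hp q = q.1 • ((1, 0) : R × R) + q.2 • p := by
  ext <;> simp [upperTriangularAddAut, mul_comm]

lemma upperTriangularAddAut_pyrGamma {k : ℕ}
    {g : AddAut (ZMod (2 ^ (k + 1)) × ZMod (2 ^ (k + 1)))} (h0 : ∀ x, g (g x) + g x + x = 0)
    (hu : IsUnit (-g (1, 0)).2) (q : ZMod (2 ^ (k + 1)) × ZMod (2 ^ (k + 1))) :
    upperTriangularAddAut _ hu (pyrGamma (k + 1) q) = g (upperTriangularAddAut _ hu q) := by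
  have hgu : g (-g (1, 0)) = g (1, 0) + (1, 0) := by
    rw [map_neg, neg_eq_iff_eq_neg, ← sub_eq_zero, ← h0]
    abel
  rw [upperTriangularAddAut_apply, upperTriangularAddAut_apply, map_add, ZMod.map_smul,
    ZMod.map_smul, hgu]
  simp only [pyrGamma, AddEquiv.coe_mk, Equiv.coe_fn_mk]
  module

theorem exists_addConj_eq_pyrGamma {k : ℕ}
    {g : AddAut (ZMod (2 ^ (k + 1)) × ZMod (2 ^ (k + 1)))} (hg : addOrderOf g = 3) :
    ∃ σ, AddAut.addConj σ g = pyrGamma (k + 1) := by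
  have h0 := ZModTwoPowSq.apply_apply_add_apply_add_self (hg ▸ addOrderOf_nsmul_eq_zero g)
    (by rintro rfl; simp at hg)
  have hu : IsUnit (-g (1, 0)).2 := (ZModTwoPowSq.isUnit_apply_one_zero_snd h0).neg
  refine ⟨-upperTriangularAddAut _ hu, AddEquiv.ext fun q ↦ ?_⟩
  rw [AddAut.addConj_apply, neg_neg, AddAut.add_apply, AddAut.add_apply, AddAut.neg_apply,
    ← upperTriangularAddAut_pyrGamma h0 hu, AddEquiv.symm_apply_apply]

theorem stmt_16 (m : ℕ) (hm : 1 ≤ m)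
    (A : AddSubgroup (AddAut (ZMod (2 ^ m) × ZMod (2 ^ m)))) (hA : Nat.card A = 3) :
    ∃ σ : AddAut (ZMod (2 ^ m) × ZMod (2 ^ m)),
      A.map (AddAut.addConj σ).toAddMonoidHom = AddSubgroup.zmultiples (pyrGamma m) := by
  obtain ⟨k, rfl⟩ : ∃ k, m = k + 1 := ⟨m - 1, by omega⟩
  have : Fact (Nat.Prime 3) := ⟨Nat.prime_three⟩
  obtain ⟨g, rfl⟩ := (AddSubgroup.isAddCyclic_iff_exists_zmultiples_eq_top A).mp
    (isAddCyclic_of_prime_card hA)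
  obtain ⟨σ, hσ⟩ := exists_addConj_eq_pyrGamma (Nat.card_zmultiples g ▸ hA)
  exact ⟨σ, by rw [AddMonoidHom.map_zmultiples, AddEquiv.coe_toAddMonoidHom, hσ]⟩
end

section
/- Let G be a finite group whose order is divisible by 4, and let O be a normal subgroup of G of odd order such that every element of O commutes with every involution of G. If the quotient group G/O is 3-pyramidal, then G is 3-pyramidal. -/
theorem stmt_17 {G : Type*} [Group G] [Finite G] (h4 : 4 ∣ Nat.card G)
    (O : Subgroup G) [O.Normal] (hOodd : Odd (Nat.card O))
    (hcent : ∀ x ∈ O, ∀ i : G, orderOf i = 2 → x * i = i * x)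
    (hquot : IsThreePyramidal (G ⧸ O)) :
    IsThreePyramidal G := by
  classical
  set π : G →* G ⧸ O := QuotientGroup.mk' O with hπ
  -- elements of O have odd order
  have hodd : ∀ x ∈ O, Odd (orderOf x) := by
    intro x hx
    have h1 : orderOf (⟨x, hx⟩ : O) = orderOf x := Subgroup.orderOf_mk x hx
    have h2 : orderOf (⟨x, hx⟩ : O) ∣ Nat.card O := orderOf_dvd_natCard _
    rw [h1] at h2
    rcases Nat.even_or_odd (orderOf x) with he | ho
    · exact absurd hOodd (Nat.not_odd_iff_even.mpr (he.trans_dvd h2))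
    · exact ho
  -- key injectivity: involutions in the same coset are equal
  have hinj : ∀ i j : G, orderOf i = 2 → orderOf j = 2 → π i = π j → i = j := by
    intro i j hi hj hij
    have hxmem : i⁻¹ * j ∈ O := by
      have : π (i⁻¹ * j) = 1 := by rw [map_mul, map_inv, hij, inv_mul_cancel]
      exact (QuotientGroup.eq_one_iff _).mp this
    set x := i⁻¹ * j with hxdef
    have hcomm : x * i = i * x := hcent x hxmem i hi
    have hii : i * i = 1 := by
      have := pow_orderOf_eq_one i; rwa [hi, sq] at this
    have hjj : j * j = 1 := by
      have := pow_orderOf_eq_one j; rwa [hj, sq] at this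
    have hjix : j = i * x := by rw [hxdef, ← mul_assoc, mul_inv_cancel, one_mul]
    have hx2 : x * x = 1 := by
      have h := hjj
      rw [hjix] at h
      calc x * x = (i * i) * (x * x) := by rw [hii, one_mul]
        _ = i * (i * x) * x := by group
        _ = i * (x * i) * x := by rw [hcomm]
        _ = (i * x) * (i * x) := by group
        _ = 1 := h
    have hx1 : x = 1 := by
      have hdvd : orderOf x ∣ 2 := orderOf_dvd_of_pow_eq_one (by rw [sq]; exact hx2)
      rcases (Nat.dvd_prime Nat.prime_two).mp hdvd with h1 | h2
      · exact orderOf_eq_one_iff.mp h1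
      · exact absurd (hodd x hxmem) (by rw [h2]; decide)
    rw [hjix, hx1, mul_one]
  -- π maps involutions to involutions
  have hmap : ∀ i : G, orderOf i = 2 → orderOf (π i) = 2 := by
    intro i hi
    have hdvd : orderOf (π i) ∣ 2 := by
      rw [← hi]; exact orderOf_map_dvd π i
    rcases (Nat.dvd_prime Nat.prime_two).mp hdvd with h1 | h2
    · exfalso
      have himem : i ∈ O := (QuotientGroup.eq_one_iff _).mp (orderOf_eq_one_iff.mp h1)
      have := hodd i himem
      rw [hi] at this
      exact (by decide : ¬ Odd 2) this
    · exact h2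
  -- surjectivity onto involutions of the quotient
  have hsurj : ∀ q : G ⧸ O, orderOf q = 2 → ∃ i : G, orderOf i = 2 ∧ π i = q := by
    intro q hq
    obtain ⟨g, hg⟩ : ∃ g : G, π g = q := QuotientGroup.mk'_surjective O q
    have hg2mem : g ^ 2 ∈ O := by
      have : π (g ^ 2) = 1 := by
        rw [map_pow, hg, ← hq, pow_orderOf_eq_one]
      exact (QuotientGroup.eq_one_iff _).mp this
    set m := orderOf (g ^ 2) with hm
    have hmodd : Odd m := hodd _ hg2mem
    refine ⟨g ^ m, ?_, ?_⟩
    · have hp2 : (g ^ m) ^ 2 = 1 := by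
        rw [← pow_mul, mul_comm, pow_mul]
        exact pow_orderOf_eq_one (g ^ 2)
      have hne : g ^ m ≠ 1 := by
        intro h1
        have hdvd : orderOf g ∣ m := orderOf_dvd_of_pow_eq_one h1
        have h2dvd : (2 : ℕ) ∣ orderOf g := by
          rw [← hq, ← hg]; exact orderOf_map_dvd π g
        have : (2 : ℕ) ∣ m := h2dvd.trans hdvd
        exact (Nat.not_odd_iff_even.mpr (even_iff_two_dvd.mpr this)) hmodd
      haveI : Fact (Nat.Prime 2) := ⟨Nat.prime_two⟩
      exact orderOf_eq_prime hp2 hne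
    · obtain ⟨k, hk⟩ := hmodd
      rw [map_pow, hg, hk, pow_succ, pow_mul, ← hq, pow_orderOf_eq_one, one_pow, one_mul]
  constructor
  · -- card: bijection between involutions
    rw [← hquot.1]
    apply Nat.card_congr
    refine Equiv.ofBijective (fun i => ⟨π i.1, hmap i.1 i.2⟩) ⟨?_, ?_⟩
    · rintro ⟨i, hi⟩ ⟨j, hj⟩ h
      exact Subtype.ext (hinj i j hi hj (congrArg Subtype.val h))
    · rintro ⟨q, hq⟩
      obtain ⟨i, hi, hiq⟩ := hsurj q hq
      exact ⟨⟨i, hi⟩, Subtype.ext hiq⟩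
  · intro i j hi hj
    obtain ⟨c, hc⟩ := isConj_iff.mp (hquot.2 (π i) (π j) (hmap i hi) (hmap j hj))
    obtain ⟨d, hd⟩ : ∃ d : G, π d = c := QuotientGroup.mk'_surjective O c
    have hsc : SemiconjBy d i (d * i * d⁻¹) := by
      show d * i = d * i * d⁻¹ * d; group
    have hconj : orderOf (d * i * d⁻¹) = 2 := (hsc.orderOf_eq d).symm.trans hi
    have : π (d * i * d⁻¹) = π j := by
      rw [map_mul, map_mul, map_inv, hd, hc]
    exact isConj_iff.mpr ⟨d, hinj _ _ hconj hj this⟩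
end

section
/- For every finite group H of odd order, the direct product S_3 × H of the symmetric group S_3 with H is a 3-pyramidal group. -/
theorem aux_iff {G : Type*} [Group G] (g : G) : orderOf g = 2 ↔ g^2 = 1 ∧ g ≠ 1 := by
  constructor
  · intro h
    refine ⟨by rw [← h]; exact pow_orderOf_eq_one g, ?_⟩
    intro hg; rw [hg] at h; simp at h
  · rintro ⟨h1, h2⟩
    exact orderOf_eq_prime h1 h2

theorem card3 : Nat.card {s : Equiv.Perm (Fin 3) | orderOf s = 2} = 3 := by
  simp only [Set.coe_setOf, aux_iff]
  rw [Nat.card_eq_fintype_card]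
  decide

theorem conj3 (s t : Equiv.Perm (Fin 3)) (hs : orderOf s = 2) (ht : orderOf t = 2) : IsConj s t := by
  rw [aux_iff] at hs ht
  revert s t; decide

theorem key {H : Type*} [Group H] [Finite H] (hH : Odd (Nat.card H))
    (x : Equiv.Perm (Fin 3) × H) : orderOf x = 2 ↔ orderOf x.1 = 2 ∧ x.2 = 1 := by
  rw [Prod.orderOf]
  constructor
  · intro h
    have hdvd : orderOf x.2 ∣ 2 := (Nat.dvd_lcm_right _ _).trans h.dvd
    have hodd : Odd (orderOf x.2) := hH.of_dvd_nat (orderOf_dvd_natCard x.2)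
    have h2 : orderOf x.2 = 1 := by
      rcases (Nat.dvd_prime Nat.prime_two).mp hdvd with h' | h'
      · exact h'
      · rw [h'] at hodd; exact absurd hodd (by decide)
    rw [h2, Nat.lcm_one_right] at h
    exact ⟨h, orderOf_eq_one_iff.mp h2⟩
  · rintro ⟨h1, h2⟩
    rw [h1, h2, orderOf_one, Nat.lcm_one_right]

theorem stmt_19 {H : Type*} [Group H] [Finite H] (hH : Odd (Nat.card H)) :
    IsThreePyramidal (Equiv.Perm (Fin 3) × H) := by
  constructor
  · have heq : Nat.card {g : Equiv.Perm (Fin 3) × H | orderOf g = 2}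
        = Nat.card {s : Equiv.Perm (Fin 3) | orderOf s = 2} := by
      apply Nat.card_eq_of_bijective
        (fun x : {g : Equiv.Perm (Fin 3) × H | orderOf g = 2} =>
          (⟨x.1.1, ((key hH x.1).mp x.2).1⟩ : {s : Equiv.Perm (Fin 3) | orderOf s = 2}))
      constructor
      · rintro ⟨⟨s, h⟩, hx⟩ ⟨⟨t, k⟩, hy⟩ hEq
        have h1 := (key hH _).mp hx
        have h2 := (key hH _).mp hy
        simp only [Subtype.mk.injEq] at hEq ⊢
        simp only at h1 h2
        exact Prod.ext hEq (h1.2.trans h2.2.symm)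
      · rintro ⟨s, hs⟩
        exact ⟨⟨(s, 1), (key hH _).mpr ⟨hs, rfl⟩⟩, rfl⟩
    rw [heq, card3]
  · intro i j hi hj
    obtain ⟨hi1, hi2⟩ := (key hH i).mp hi
    obtain ⟨hj1, hj2⟩ := (key hH j).mp hj
    obtain ⟨c, hc⟩ := isConj_iff.mp (conj3 i.1 j.1 hi1 hj1)
    apply isConj_iff.mpr
    refine ⟨(c, 1), ?_⟩
    apply Prod.ext
    · simpa using hc
    · simp [hi2, hj2]
end
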